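/- arXiv:1811.05138 — 3 statements merged into one kernel-verified Lean document; each statement's English description precedes it below -/
import Mathlib

section
/- For the Luce-QRE of the asymmetric matching-pennies game with payoffs Row: (1,0;0,5) (Row gets 1 at (A,A), 5 at (B,B), 0 otherwise) and Column: (0,5;1,0), the fixed-point equations p = π_A^{ρ_C}/(π_A^{ρ_C}+π_B^{ρ_C}) (Column) and q = π_A^{ρ_R}/(π_A^{ρ_R}+π_B^{ρ_R}) (Row) are solved by p(ρ_R,ρ_C) = 1/(1 + 5^{ρ_C(1−ρ_R)/(ρ_C ρ_R + 1)}) and q(ρ_R,ρ_C) = 1/(1 + 5^{ρ_R(1+ρ_C)/(ρ_C ρ_R + 1)}). -/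
open Real

/-- The closed-form expressions solve the Luce-QRE fixed-point equations of the
asymmetric matching-pennies game: with `q` the probability Row plays `A` and
`p` the probability Column plays `A`, Row's expected payoffs are `p` and
`5(1-p)` and Column's are `1-q` and `5q`. -/
theorem luceQRE_closed_form (ρR ρC : ℝ) (hR : 0 < ρR) (hC : 0 < ρC) :
    let p : ℝ := 1 / (1 + (5 : ℝ) ^ (ρC * (1 - ρR) / (ρC * ρR + 1)))
    let q : ℝ := 1 / (1 + (5 : ℝ) ^ (ρR * (1 + ρC) / (ρC * ρR + 1)))
    q = p ^ ρR / (p ^ ρR + (5 * (1 - p)) ^ ρR) ∧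
    p = (1 - q) ^ ρC / ((1 - q) ^ ρC + (5 * q) ^ ρC) := by
  intro p q
  set x : ℝ := ρC * (1 - ρR) / (ρC * ρR + 1) with hx
  set y : ℝ := ρR * (1 + ρC) / (ρC * ρR + 1) with hy
  have hD : (0:ℝ) < ρC * ρR + 1 := by positivity
  have hE1 : ρR + x * ρR = y := by
    rw [hx, hy]; field_simp; ring
  have hE2 : x + y * ρC = ρC := by
    rw [hx, hy]; field_simp; ring
  set a : ℝ := (5:ℝ) ^ x with ha'
  set b : ℝ := (5:ℝ) ^ y with hb'
  have h5 : (0:ℝ) < 5 := by norm_num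
  have ha : (0:ℝ) < a := rpow_pos_of_pos h5 x
  have hb : (0:ℝ) < b := rpow_pos_of_pos h5 y
  have h1a : (0:ℝ) < 1 + a := by linarith
  have h1b : (0:ℝ) < 1 + b := by linarith
  have hp : p = 1 / (1 + a) := rfl
  have hq : q = 1 / (1 + b) := rfl
  have h1p : 1 - p = a / (1 + a) := by rw [hp]; field_simp; ring
  have h1q : 1 - q = b / (1 + b) := by rw [hq]; field_simp; ring
  have hab : (5 * a) ^ ρR = b := by
    rw [mul_rpow h5.le ha.le, ha', ← rpow_mul h5.le, ← rpow_add h5, hE1, hb']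
  have hba : a * b ^ ρC = (5:ℝ) ^ ρC := by
    rw [hb', ← rpow_mul h5.le, ha', ← rpow_add h5, hE2]
  have hc : (0:ℝ) < (1 + a) ^ ρR := rpow_pos_of_pos h1a ρR
  have hd : (0:ℝ) < (1 + b) ^ ρC := rpow_pos_of_pos h1b ρC
  constructor
  · have hpR : p ^ ρR = 1 / (1 + a) ^ ρR := by
      rw [hp, div_rpow zero_le_one h1a.le, one_rpow]
    have h5pR : (5 * (1 - p)) ^ ρR = b / (1 + a) ^ ρR := by
      rw [h1p, mul_div_assoc', div_rpow (by positivity) h1a.le, hab]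
    rw [hq, hpR, h5pR]
    field_simp
  · have hqC : (1 - q) ^ ρC = b ^ ρC / (1 + b) ^ ρC := by
      rw [h1q, div_rpow hb.le h1b.le]
    have h5qC : (5 * q) ^ ρC = (5:ℝ) ^ ρC / (1 + b) ^ ρC := by
      rw [hq, mul_one_div, div_rpow h5.le h1b.le]
    have hbC : (0:ℝ) < b ^ ρC := rpow_pos_of_pos hb ρC
    have h2 : (0:ℝ) < b ^ ρC + 5 ^ ρC := by positivity
    have h3 : b ^ ρC / (1 + b) ^ ρC / ((b ^ ρC + 5 ^ ρC) / (1 + b) ^ ρC)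
        = b ^ ρC / (b ^ ρC + 5 ^ ρC) := by
      field_simp
    rw [hp, hqC, h5qC, ← add_div, h3, div_eq_div_iff h1a.ne' h2.ne']
    linear_combination -hba
end

section
/- The closure of the set of Luce-QRE points of the asymmetric matching-pennies game, as (ρ_R, ρ_C) ranges over [0,∞)², equals ([0,1/2] × [1/6,1/2]) ∪ ([1/2,5/6] × [0,1/6]) ⊂ [0,1]². -/
open Real Set

/-- The Luce-QRE point of the asymmetric matching-pennies game. -/
noncomputable def lucePoint (ρ : ℝ × ℝ) : ℝ × ℝ :=
  (1 / (1 + (5 : ℝ) ^ (ρ.2 * (1 - ρ.1) / (ρ.2 * ρ.1 + 1))),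
   1 / (1 + (5 : ℝ) ^ (ρ.1 * (1 + ρ.2) / (ρ.2 * ρ.1 + 1))))

private lemma f_anti {x y : ℝ} (h : x ≤ y) :
    1 / (1 + (5 : ℝ) ^ y) ≤ 1 / (1 + (5 : ℝ) ^ x) := by
  have h1 : (0:ℝ) < 1 + (5:ℝ) ^ x := by positivity
  have h2 := Real.rpow_le_rpow_of_exponent_le (by norm_num : (1:ℝ) ≤ 5) h
  exact one_div_le_one_div_of_le h1 (by linarith)

/-- The explicit inverse formula. -/
private lemma luce_inv {a b : ℝ} (h1 : (0:ℝ) < 1 + a) (h2 : 1 - b ≠ 0)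
    (h3 : 1 + a - b ≠ 0) :
    lucePoint (b / (1 + a), a / (1 - b)) = (1 / (1 + (5:ℝ) ^ a), 1 / (1 + (5:ℝ) ^ b)) := by
  have h1' : (1:ℝ) + a ≠ 0 := ne_of_gt h1
  have hst : a / (1 - b) * (b / (1 + a)) + 1 = (1 + a - b) / ((1 - b) * (1 + a)) := by
    field_simp; ring
  have hstne : a / (1 - b) * (b / (1 + a)) + 1 ≠ 0 := by
    rw [hst]; exact div_ne_zero h3 (mul_ne_zero h2 h1')
  have hA : a / (1 - b) * (1 - b / (1 + a)) / (a / (1 - b) * (b / (1 + a)) + 1) = a := by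
    rw [div_eq_iff hstne, hst]; field_simp; try ring
  have hB : b / (1 + a) * (1 + a / (1 - b)) / (a / (1 - b) * (b / (1 + a)) + 1) = b := by
    rw [div_eq_iff hstne, hst]; field_simp; try ring
  simp only [lucePoint, hA, hB]

/-- The closure of the set of Luce-QRE points, as the rationality parameters
`(ρR, ρC)` range over `[0,∞)²`, equals `[0,1/2] × [1/6,1/2] ∪ [1/2,5/6] × [0,1/6]`. -/
theorem closure_luceQRE :
    closure (lucePoint '' (Ici (0 : ℝ) ×ˢ Ici (0 : ℝ))) =
      (Icc (0 : ℝ) (1/2) ×ˢ Icc (1/6 : ℝ) (1/2)) ∪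
      (Icc (1/2 : ℝ) (5/6) ×ˢ Icc (0 : ℝ) (1/6)) := by
  apply Subset.antisymm
  · -- closure ⊆ union, since the union is closed and contains the image
    apply closure_minimal _ (((isClosed_Icc.prod isClosed_Icc).union
      (isClosed_Icc.prod isClosed_Icc)))
    rintro x ⟨⟨t, s⟩, ⟨ht, hs⟩, rfl⟩
    simp only [mem_Ici] at ht hs
    set A := s * (1 - t) / (s * t + 1) with hAdef
    set B := t * (1 + s) / (s * t + 1) with hBdef
    have hD : (0:ℝ) < s * t + 1 := by positivity
    rcases le_or_gt t 1 with htle | htgt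
    · left
      have hA0 : 0 ≤ A := div_nonneg (mul_nonneg hs (by linarith)) hD.le
      have hB0 : 0 ≤ B := div_nonneg (mul_nonneg ht (by linarith)) hD.le
      have hB1 : B ≤ 1 := (div_le_one hD).mpr (by nlinarith)
      constructor
      · constructor
        · show (0:ℝ) ≤ 1 / (1 + (5:ℝ) ^ A)
          positivity
        · have := f_anti hA0
          rw [Real.rpow_zero] at this
          calc (lucePoint (t, s)).1 = 1 / (1 + (5:ℝ) ^ A) := rfl
            _ ≤ 1 / (1 + 1) := this
            _ = 1/2 := by norm_num
      · constructor
        · have := f_anti hB1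
          rw [Real.rpow_one] at this
          calc (1:ℝ)/6 = 1 / (1 + 5) := by norm_num
            _ ≤ 1 / (1 + (5:ℝ) ^ B) := this
            _ = (lucePoint (t, s)).2 := rfl
        · have := f_anti hB0
          rw [Real.rpow_zero] at this
          calc (lucePoint (t, s)).2 = 1 / (1 + (5:ℝ) ^ B) := rfl
            _ ≤ 1 / (1 + 1) := this
            _ = 1/2 := by norm_num
    · right
      have hA0 : A ≤ 0 := div_nonpos_of_nonpos_of_nonneg
        (mul_nonpos_of_nonneg_of_nonpos hs (by linarith)) hD.le
      have hA1 : -1 ≤ A := by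
        rw [hAdef, le_div_iff₀ hD]; nlinarith
      have hB1 : 1 ≤ B := (one_le_div hD).mpr (by nlinarith)
      constructor
      · constructor
        · have := f_anti hA0
          rw [Real.rpow_zero] at this
          calc (1:ℝ)/2 = 1 / (1 + 1) := by norm_num
            _ ≤ 1 / (1 + (5:ℝ) ^ A) := this
            _ = (lucePoint (t, s)).1 := rfl
        · have := f_anti hA1
          rw [Real.rpow_neg_one] at this
          calc (lucePoint (t, s)).1 = 1 / (1 + (5:ℝ) ^ A) := rfl
            _ ≤ 1 / (1 + (5:ℝ)⁻¹) := this
            _ = 5/6 := by norm_num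
      · constructor
        · show (0:ℝ) ≤ 1 / (1 + (5:ℝ) ^ B)
          positivity
        · have := f_anti hB1
          rw [Real.rpow_one] at this
          calc (lucePoint (t, s)).2 = 1 / (1 + (5:ℝ) ^ B) := rfl
            _ ≤ 1 / (1 + 5) := this
            _ = 1/6 := by norm_num
  · -- union ⊆ closure, via the open rectangles
    have h5 : (1:ℝ) < 5 := by norm_num
    have hV : (Ioo (0:ℝ) (1/2) ×ˢ Ioo (1/6:ℝ) (1/2)) ∪
        (Ioo (1/2:ℝ) (5/6) ×ˢ Ioo (0:ℝ) (1/6)) ⊆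
        lucePoint '' (Ici (0 : ℝ) ×ˢ Ici (0 : ℝ)) := by
      rintro ⟨p, q⟩ (⟨⟨hp1, hp2⟩, hq1, hq2⟩ | ⟨⟨hp1, hp2⟩, hq1, hq2⟩)
      · -- p ∈ (0, 1/2), q ∈ (1/6, 1/2)
        have hp0 : (0:ℝ) < p := hp1
        have hq0 : (0:ℝ) < q := by linarith
        have hxp : (0:ℝ) < (1 - p) / p := by
          apply div_pos (by linarith) hp0
        have hxq : (0:ℝ) < (1 - q) / q := div_pos (by linarith) hq0
        set a := Real.logb 5 ((1 - p) / p) with hadef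
        set b := Real.logb 5 ((1 - q) / q) with hbdef
        have ha5 : (5:ℝ) ^ a = (1 - p) / p := Real.rpow_logb (by norm_num) (by norm_num) hxp
        have hb5 : (5:ℝ) ^ b = (1 - q) / q := Real.rpow_logb (by norm_num) (by norm_num) hxq
        have ha0 : 0 < a := Real.logb_pos h5 ((one_lt_div hp0).mpr (by linarith))
        have hb0 : 0 < b := Real.logb_pos h5 ((one_lt_div hq0).mpr (by linarith))
        have hb1 : b < 1 := by
          rw [hbdef, Real.logb_lt_iff_lt_rpow h5 hxq, Real.rpow_one, div_lt_iff₀ hq0]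
          linarith
        have hne1 : (0:ℝ) < 1 + a := by linarith
        have hne2 : (1:ℝ) - b ≠ 0 := by intro h; linarith
        have hne3 : (1:ℝ) + a - b ≠ 0 := by intro h; linarith
        refine ⟨(b / (1 + a), a / (1 - b)), ⟨?_, ?_⟩, ?_⟩
        · exact div_nonneg hb0.le (by linarith)
        · exact div_nonneg ha0.le (by linarith)
        · rw [luce_inv hne1 hne2 hne3, ha5, hb5]
          have e1 : 1 + (1 - p) / p = 1 / p := by field_simp; ring
          have e2 : 1 + (1 - q) / q = 1 / q := by field_simp; ring
          rw [e1, e2, one_div_one_div, one_div_one_div]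
      · -- p ∈ (1/2, 5/6), q ∈ (0, 1/6)
        have hp0 : (0:ℝ) < p := by linarith
        have hq0 : (0:ℝ) < q := hq1
        have hxp : (0:ℝ) < (1 - p) / p := div_pos (by linarith) hp0
        have hxq : (0:ℝ) < (1 - q) / q := div_pos (by linarith) hq0
        set a := Real.logb 5 ((1 - p) / p) with hadef
        set b := Real.logb 5 ((1 - q) / q) with hbdef
        have ha5 : (5:ℝ) ^ a = (1 - p) / p := Real.rpow_logb (by norm_num) (by norm_num) hxp
        have hb5 : (5:ℝ) ^ b = (1 - q) / q := Real.rpow_logb (by norm_num) (by norm_num) hxq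
        have ha0 : a < 0 := Real.logb_neg h5 hxp ((div_lt_one hp0).mpr (by linarith))
        have ha1 : -1 < a := by
          rw [hadef, Real.lt_logb_iff_rpow_lt h5 hxp, Real.rpow_neg_one, lt_div_iff₀ hp0]
          norm_num; linarith
        have hb1 : 1 < b := by
          rw [hbdef, Real.lt_logb_iff_rpow_lt h5 hxq, Real.rpow_one, lt_div_iff₀ hq0]
          linarith
        have hne1 : (0:ℝ) < 1 + a := by linarith
        have hne2 : (1:ℝ) - b ≠ 0 := by intro h; linarith
        have hne3 : (1:ℝ) + a - b ≠ 0 := by intro h; linarith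
        refine ⟨(b / (1 + a), a / (1 - b)), ⟨?_, ?_⟩, ?_⟩
        · exact div_nonneg (by linarith : (0:ℝ) ≤ b) hne1.le
        · exact div_nonneg_iff.mpr (Or.inr ⟨ha0.le, by linarith⟩)
        · rw [luce_inv hne1 hne2 hne3, ha5, hb5]
          have e1 : 1 + (1 - p) / p = 1 / p := by field_simp; ring
          have e2 : 1 + (1 - q) / q = 1 / q := by field_simp; ring
          rw [e1, e2, one_div_one_div, one_div_one_div]
    have hcl : closure ((Ioo (0:ℝ) (1/2) ×ˢ Ioo (1/6:ℝ) (1/2)) ∪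
        (Ioo (1/2:ℝ) (5/6) ×ˢ Ioo (0:ℝ) (1/6))) =
        (Icc (0 : ℝ) (1/2) ×ˢ Icc (1/6 : ℝ) (1/2)) ∪
        (Icc (1/2 : ℝ) (5/6) ×ˢ Icc (0 : ℝ) (1/6)) := by
      rw [closure_union, closure_prod_eq, closure_prod_eq,
        closure_Ioo (by norm_num : (0:ℝ) ≠ 1/2), closure_Ioo (by norm_num : (1/6:ℝ) ≠ 1/2),
        closure_Ioo (by norm_num : (1/2:ℝ) ≠ 5/6), closure_Ioo (by norm_num : (0:ℝ) ≠ 1/6)]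
    rw [← hcl]
    exact closure_mono hV
end

section
/- Existence of a rank fixed point in a 2×2 game via continuity/IVT: for any 2×2 game with continuous expected payoff differences d_R(p) and d_C(q) (Row's payoff advantage of A given Column plays A with probability p, and similarly for Column), there exists (p*, q*) ∈ [1/3,2/3]² with q* ∈ rank(d_R(p*)) and p* ∈ rank(d_C(q*)), where rank(t) = {2/3} if t > 0, {1/3} if t < 0, and [1/3,2/3] if t = 0. -/
open scoped Classical

/-- The two-option rank correspondence as a function of the payoff difference. -/
noncomputable def rnk (t : ℝ) : Set ℝ :=
  if t > 0 then {2/3}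
  else if t < 0 then {1/3}
  else Set.Icc (1/3 : ℝ) (2/3)

lemma mem_rnk_of_nonneg {t : ℝ} (h : 0 ≤ t) : (2/3 : ℝ) ∈ rnk t := by
  unfold rnk
  rcases h.lt_or_eq with h' | h'
  · simp [h']
  · simp [← h', Set.mem_Icc]
    norm_num

lemma mem_rnk_of_nonpos {t : ℝ} (h : t ≤ 0) : (1/3 : ℝ) ∈ rnk t := by
  unfold rnk
  rcases h.lt_or_eq with h' | h'
  · simp [h', not_lt.mpr h'.le]
  · simp [h', Set.mem_Icc]
    norm_num

lemma mem_rnk_of_eq {t x : ℝ} (h : t = 0) (hx : x ∈ Set.Icc (1/3 : ℝ) (2/3)) :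
    x ∈ rnk t := by
  unfold rnk
  simp only [h, lt_irrefl, if_false]
  exact hx

lemma exists_zero_of_sign_change {f : ℝ → ℝ} (hf : Continuous f)
    (h : f (1/3) ≤ 0 ∧ 0 ≤ f (2/3) ∨ f (2/3) ≤ 0 ∧ 0 ≤ f (1/3)) :
    ∃ x ∈ Set.Icc (1/3 : ℝ) (2/3), f x = 0 := by
  have hab : (1/3 : ℝ) ≤ 2/3 := by norm_num
  rcases h with ⟨h1, h2⟩ | ⟨h1, h2⟩
  · have := intermediate_value_Icc hab hf.continuousOn
    have h0 : (0 : ℝ) ∈ Set.Icc (f (1/3)) (f (2/3)) := ⟨h1, h2⟩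
    obtain ⟨x, hx, hfx⟩ := this h0
    exact ⟨x, hx, hfx⟩
  · have := intermediate_value_Icc' hab hf.continuousOn
    have h0 : (0 : ℝ) ∈ Set.Icc (f (2/3)) (f (1/3)) := ⟨h1, h2⟩
    obtain ⟨x, hx, hfx⟩ := this h0
    exact ⟨x, hx, hfx⟩

/-- Existence of a rank fixed point in a 2×2 game: for continuous expected
payoff differences `dR` and `dC` there is a profile `(p*, q*) ∈ [1/3,2/3]²`
with `q* ∈ rank(dR p*)` and `p* ∈ rank(dC q*)`. -/
theorem rank_fixed_point_exists (dR dC : ℝ → ℝ)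
    (hR : Continuous dR) (hC : Continuous dC) :
    ∃ p q : ℝ, p ∈ Set.Icc (1/3 : ℝ) (2/3) ∧ q ∈ Set.Icc (1/3 : ℝ) (2/3) ∧
      q ∈ rnk (dR p) ∧ p ∈ rnk (dC q) := by
  have hlo : (1/3 : ℝ) ∈ Set.Icc (1/3 : ℝ) (2/3) := by norm_num
  have hhi : (2/3 : ℝ) ∈ Set.Icc (1/3 : ℝ) (2/3) := by norm_num
  rcases le_total 0 (dR (1/3)) with hc | hc <;> rcases le_total 0 (dR (2/3)) with hd | hd
  · -- dR nonneg at both endpoints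
    rcases le_total 0 (dC (2/3)) with hb | hb
    · exact ⟨2/3, 2/3, hhi, hhi, mem_rnk_of_nonneg hd, mem_rnk_of_nonneg hb⟩
    · exact ⟨1/3, 2/3, hlo, hhi, mem_rnk_of_nonneg hc, mem_rnk_of_nonpos hb⟩
  · -- dR ≥ 0 at 1/3, ≤ 0 at 2/3
    rcases le_total 0 (dC (1/3)) with ha | ha
    · exact ⟨2/3, 1/3, hhi, hlo, mem_rnk_of_nonpos hd, mem_rnk_of_nonneg ha⟩
    · rcases le_total 0 (dC (2/3)) with hb | hb
      · -- dC changes sign: zeros of both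
        obtain ⟨q, hq, hq0⟩ := exists_zero_of_sign_change hC (Or.inl ⟨ha, hb⟩)
        obtain ⟨p, hp, hp0⟩ := exists_zero_of_sign_change hR (Or.inr ⟨hd, hc⟩)
        exact ⟨p, q, hp, hq, mem_rnk_of_eq hp0 hq, mem_rnk_of_eq hq0 hp⟩
      · exact ⟨1/3, 2/3, hlo, hhi, mem_rnk_of_nonneg hc, mem_rnk_of_nonpos hb⟩
  · -- dR ≤ 0 at 1/3, ≥ 0 at 2/3
    rcases le_total 0 (dC (2/3)) with hb | hb
    · exact ⟨2/3, 2/3, hhi, hhi, mem_rnk_of_nonneg hd, mem_rnk_of_nonneg hb⟩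
    · rcases le_total 0 (dC (1/3)) with ha | ha
      · obtain ⟨q, hq, hq0⟩ := exists_zero_of_sign_change hC (Or.inr ⟨hb, ha⟩)
        obtain ⟨p, hp, hp0⟩ := exists_zero_of_sign_change hR (Or.inl ⟨hc, hd⟩)
        exact ⟨p, q, hp, hq, mem_rnk_of_eq hp0 hq, mem_rnk_of_eq hq0 hp⟩
      · exact ⟨1/3, 1/3, hlo, hlo, mem_rnk_of_nonpos hc, mem_rnk_of_nonpos ha⟩
  · -- dR nonpos at both endpoints
    rcases le_total 0 (dC (1/3)) with ha | ha
    · exact ⟨2/3, 1/3, hhi, hlo, mem_rnk_of_nonpos hd, mem_rnk_of_nonneg ha⟩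
    · exact ⟨1/3, 1/3, hlo, hlo, mem_rnk_of_nonpos hc, mem_rnk_of_nonpos ha⟩
end
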